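/- arXiv:1606.04176 — 2 statements merged into one kernel-verified Lean document; each statement's English description precedes it below -/
import Mathlib

section
/- Let Φ ∈ ℝ^{N×n} have rank n and let Q₂ᵀ ∈ ℝ^{(N−n)×N} be a matrix whose null space equals the column space of Φ. If |supp(Φ z)| > 2s for all nonzero z ∈ ℝ^n, then every set of 2s columns of Q₂ᵀ is linearly independent. -/
/-- The support of a vector: the set of indices with nonzero entries. -/
noncomputable def supp {n : ℕ} (x : Fin n → ℝ) : Finset (Fin n) :=
  Finset.univ.filter (fun i => x i ≠ 0)

/-- if `|supp(Φ z)| > 2s` for all nonzero `z` and the null space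
of `Q₂ᵀ` equals the column space of `Φ`, then every set of `2s` columns of
`Q₂ᵀ` is linearly independent. -/
theorem Q2T_columns_linIndep {N n s : ℕ}
    (Φ : Matrix (Fin N) (Fin n) ℝ) (Q2T : Matrix (Fin (N - n)) (Fin N) ℝ)
    (hrank : Φ.rank = n)
    (hnull : ∀ E : Fin N → ℝ, Q2T.mulVec E = 0 ↔ ∃ z : Fin n → ℝ, E = Φ.mulVec z)
    (hsupp : ∀ z : Fin n → ℝ, z ≠ 0 → 2 * s < (supp (Φ.mulVec z)).card) :
    ∀ S : Finset (Fin N), S.card = 2 * s →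
      LinearIndependent ℝ (fun j : S => (fun i => Q2T i (j : Fin N))) := by
  intro S hS
  rw [Fintype.linearIndependent_iff]
  intro g hg j
  set E : Fin N → ℝ := fun i => if h : i ∈ S then g ⟨i, h⟩ else 0 with hEdef
  have hE0 : Q2T.mulVec E = 0 := by
    funext r
    have hr := congrFun hg r
    simp only [Finset.sum_apply, Pi.smul_apply, smul_eq_mul, Pi.zero_apply] at hr
    have step1 : Q2T.mulVec E r = ∑ i ∈ S, Q2T r i * E i := by
      simp only [Matrix.mulVec, dotProduct]
      rw [← Finset.sum_subset (Finset.subset_univ S)]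
      intro i _ hiS
      simp [hEdef, dif_neg hiS]
    have step2 : ∑ i ∈ S, Q2T r i * E i = ∑ j : S, g j * Q2T r (j : Fin N) := by
      rw [← Finset.sum_attach S (fun i => Q2T r i * E i)]
      apply Finset.sum_congr rfl
      intro x _
      simp [hEdef, dif_pos x.2, mul_comm]
    rw [step1, step2, hr]
    rfl
  have hEzero : E = 0 := by
    by_contra hne
    obtain ⟨z, hz⟩ := (hnull E).1 hE0
    have hzne : z ≠ 0 := by
      intro h0
      apply hne
      rw [hz, h0, Matrix.mulVec_zero]
    have hsub : supp E ⊆ S := by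
      intro i hi
      simp only [supp, Finset.mem_filter, hEdef] at hi
      by_contra hiS
      exact hi.2 (dif_neg hiS)
    have hle : (supp E).card ≤ 2 * s := hS ▸ Finset.card_le_card hsub
    have := hsupp z hzne
    rw [← hz] at this
    omega
  have : E (j : Fin N) = 0 := by rw [hEzero]; rfl
  simpa [hEdef] using this
end

section
/- Let Φ ∈ ℝ^{N×n} with rank n and suppose |supp(Φ z)| > 2s for every nonzero z ∈ ℝ^n. Let Y = Φ x₀ + E₀ where ‖E₀‖₀ ≤ s. Then x₀ and E₀ are uniquely determined by Y: if Φ x₁ + E₁ = Φ x₀ + E₀ with ‖E₁‖₀ ≤ s, then x₁ = x₀ and E₁ = E₀. -/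
/-- The number of nonzero entries (the "ℓ₀ norm") of a vector. -/
noncomputable def sparsity {n : ℕ} (x : Fin n → ℝ) : ℕ :=
  (Finset.univ.filter (fun i => x i ≠ 0)).card

lemma sparsity_sub_le {n : ℕ} (a b : Fin n → ℝ) :
    sparsity (a - b) ≤ sparsity a + sparsity b := by
  classical
  unfold sparsity
  calc (Finset.univ.filter (fun i => (a - b) i ≠ 0)).card
      ≤ ((Finset.univ.filter (fun i => a i ≠ 0)) ∪
         (Finset.univ.filter (fun i => b i ≠ 0))).card := by
        apply Finset.card_le_card
        intro i hi
        simp only [Finset.mem_filter, Finset.mem_union, Finset.mem_univ, true_and,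
          Pi.sub_apply] at *
        by_contra h
        push_neg at h
        simp [h.1, h.2] at hi
    _ ≤ _ := Finset.card_union_le _ _

/-- if `|supp(Φ z)| > 2s` for every nonzero `z`, then the
decomposition `Y = Φ x₀ + E₀` with `‖E₀‖₀ ≤ s` is unique. -/
theorem decoder_uniqueness {N n s : ℕ}
    (Φ : Matrix (Fin N) (Fin n) ℝ)
    (hrank : Φ.rank = n)
    (hsupp : ∀ z : Fin n → ℝ, z ≠ 0 → 2 * s < sparsity (Φ.mulVec z))
    (x₀ x₁ : Fin n → ℝ) (E₀ E₁ : Fin N → ℝ)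
    (hE₀ : sparsity E₀ ≤ s) (hE₁ : sparsity E₁ ≤ s)
    (heq : Φ.mulVec x₁ + E₁ = Φ.mulVec x₀ + E₀) :
    x₁ = x₀ ∧ E₁ = E₀ := by
  have hz : Φ.mulVec (x₁ - x₀) = E₀ - E₁ := by
    rw [Matrix.mulVec_sub]
    have := heq
    funext i
    have h := congrFun heq i
    simp only [Pi.add_apply, Pi.sub_apply] at h ⊢
    linarith
  have hx : x₁ = x₀ := by
    by_contra h
    have hne : x₁ - x₀ ≠ 0 := sub_ne_zero.mpr h
    have h1 := hsupp _ hne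
    rw [hz] at h1
    have h2 := sparsity_sub_le E₀ E₁
    omega
  refine ⟨hx, ?_⟩
  subst hx
  have := add_left_cancel heq
  exact this
end
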